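/- arXiv:2404.06192 — 2 statements merged into one kernel-verified Lean document; each statement's English description precedes it below -/
import Mathlib

section
/- In a symmetric monoidal category in which every object X carries a counital comagma structure (δ_X : X → X ⊗ X, ε_X : X → I) such that every morphism is a comagma homomorphism and the structure is uniform (ε_{X⊗Y} = ε_X ⊗ ε_Y, ε_I = id, δ_I = id, and δ_{X⊗Y} = (δ_X ⊗ δ_Y) ≫ (id ⊗ σ_{X,Y} ⊗ id)), the comultiplication δ_X is cocommutative: δ_X ≫ σ_{X,X} = δ_X. -/
/-!
The counits give projections `X ⊗ Y ⟶ X` and `X ⊗ Y ⟶ Y`, and by uniformity and counitality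
`δ (X ⊗ Y)` followed by the tensor product of these projections is the identity. Since every
morphism `g : Z ⟶ X ⊗ Y` commutes with the comultiplications, `g` is therefore recovered from
its two components as `δ Z ≫ (g₁ ⊗ g₂)`. The two components of `δ X ≫ β_ X X` are those of
`δ X` swapped, and both are `𝟙 X` by counitality, so `δ X ≫ β_ X X` and `δ X` agree.
-/

open CategoryTheory MonoidalCategory

section Monoidal

variable {C : Type*} [Category C] [MonoidalCategory C]

theorem eq_comp_tensorHom_of_retraction {Z W₁ W₂ : C} {δZ : Z ⟶ Z ⊗ Z}
    {δW : W₁ ⊗ W₂ ⟶ (W₁ ⊗ W₂) ⊗ (W₁ ⊗ W₂)} {p : W₁ ⊗ W₂ ⟶ W₁} {q : W₁ ⊗ W₂ ⟶ W₂}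
    (hpq : δW ≫ (p ⊗ₘ q) = 𝟙 _) (g : Z ⟶ W₁ ⊗ W₂) (hg : g ≫ δW = δZ ≫ (g ⊗ₘ g)) :
    g = δZ ≫ ((g ≫ p) ⊗ₘ (g ≫ q)) :=
  calc g = g ≫ δW ≫ (p ⊗ₘ q) := by rw [hpq, Category.comp_id]
    _ = δZ ≫ ((g ≫ p) ⊗ₘ (g ≫ q)) := by
      rw [← Category.assoc, hg, Category.assoc, tensorHom_comp_tensorHom]

end Monoidal

section Braided

variable {C : Type*} [Category C] [MonoidalCategory C] [BraidedCategory C]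

theorem braiding_hom_comp_whiskerLeft_comp_rightUnitor {X Y : C} (a : X ⟶ 𝟙_ C) :
    (β_ X Y).hom ≫ Y ◁ a ≫ (ρ_ Y).hom = a ▷ Y ≫ (λ_ Y).hom := by
  rw [← BraidedCategory.braiding_naturality_left_assoc, braiding_rightUnitor]

theorem braiding_hom_comp_whiskerRight_comp_leftUnitor {X Y : C} (b : Y ⟶ 𝟙_ C) :
    (β_ X Y).hom ≫ b ▷ X ≫ (λ_ X).hom = X ◁ b ≫ (ρ_ X).hom := by
  rw [← BraidedCategory.braiding_naturality_right_assoc, braiding_leftUnitor]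

theorem tensorμ_comp_rightUnitor_tensorHom_leftUnitor (X Y : C) :
    tensorμ X (𝟙_ C) (𝟙_ C) Y ≫ ((ρ_ X).hom ⊗ₘ (λ_ Y).hom) = (ρ_ X).hom ⊗ₘ (λ_ Y).hom := by
  rw [tensorμ, braiding_tensorUnit_left]
  monoidal

theorem tensorμ_comp_discard_inner {X Y : C} (a : X ⟶ 𝟙_ C) (b : Y ⟶ 𝟙_ C) :
    tensorμ X X Y Y ≫ ((X ◁ b ≫ (ρ_ X).hom) ⊗ₘ (a ▷ Y ≫ (λ_ Y).hom)) =
      (X ◁ a ≫ (ρ_ X).hom) ⊗ₘ (b ▷ Y ≫ (λ_ Y).hom) := by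
  have := tensorμ_natural_assoc (𝟙 X) a b (𝟙 Y) ((ρ_ X).hom ⊗ₘ (λ_ Y).hom)
  simp only [id_tensorHom, tensorHom_id, tensorμ_comp_rightUnitor_tensorHom_leftUnitor,
    tensorHom_comp_tensorHom] at this
  exact this.symm

theorem tensorHom_comp_tensorμ_comp_counits {X Y : C} {d : X ⟶ X ⊗ X} {e : Y ⟶ Y ⊗ Y}
    {a : X ⟶ 𝟙_ C} {b : Y ⟶ 𝟙_ C}
    (hd : d ≫ X ◁ a ≫ (ρ_ X).hom = 𝟙 X) (he : e ≫ b ▷ Y ≫ (λ_ Y).hom = 𝟙 Y) :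
    (d ⊗ₘ e) ≫ tensorμ X X Y Y ≫ ((X ◁ b ≫ (ρ_ X).hom) ⊗ₘ (a ▷ Y ≫ (λ_ Y).hom)) =
      𝟙 (X ⊗ Y) := by
  rw [tensorμ_comp_discard_inner, tensorHom_comp_tensorHom, hd, he, id_tensorHom_id]

end Braided

theorem comagma_cocommutative_general {C : Type*} [Category C] [MonoidalCategory C]
    [SymmetricCategory C]
    (δ : ∀ X : C, X ⟶ X ⊗ X) (ε : ∀ X : C, X ⟶ 𝟙_ C)
    (counit_l : ∀ X : C, δ X ≫ (ε X ⊗ₘ 𝟙 X) ≫ (λ_ X).hom = 𝟙 X)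
    (counit_r : ∀ X : C, δ X ≫ (𝟙 X ⊗ₘ ε X) ≫ (ρ_ X).hom = 𝟙 X)
    (hom_δ : ∀ {X Y : C} (f : X ⟶ Y), f ≫ δ Y = δ X ≫ (f ⊗ₘ f))
    (unif_δ : ∀ X Y : C, δ (X ⊗ Y) = (δ X ⊗ₘ δ Y) ≫
      (α_ X X (Y ⊗ Y)).hom ≫
      (X ◁ ((α_ X Y Y).inv ≫ ((β_ X Y).hom ▷ Y) ≫ (α_ Y X Y).hom)) ≫
      (α_ X Y (X ⊗ Y)).inv) :
    ∀ X : C, δ X ≫ (β_ X X).hom = δ X := by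
  intro X
  have hl : δ X ≫ ε X ▷ X ≫ (λ_ X).hom = 𝟙 X := by simpa using counit_l X
  have hr : δ X ≫ X ◁ ε X ≫ (ρ_ X).hom = 𝟙 X := by simpa using counit_r X
  have hδ : δ (X ⊗ X) = (δ X ⊗ₘ δ X) ≫ tensorμ X X X X := by
    rw [unif_δ, tensorμ]
    simp only [whiskerLeft_comp, Category.assoc]
  have retraction :
      δ (X ⊗ X) ≫ ((X ◁ ε X ≫ (ρ_ X).hom) ⊗ₘ (ε X ▷ X ≫ (λ_ X).hom)) = 𝟙 (X ⊗ X) := by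
    rw [hδ, Category.assoc]
    exact tensorHom_comp_tensorμ_comp_counits hr hl
  simpa only [Category.assoc, braiding_hom_comp_whiskerLeft_comp_rightUnitor,
    braiding_hom_comp_whiskerRight_comp_leftUnitor, hl, hr, id_tensorHom_id, Category.comp_id]
    using eq_comp_tensorHom_of_retraction retraction (δ X ≫ (β_ X X).hom) (hom_δ _)

/-- Refined Fox theorem, cocommutativity part: in a symmetric monoidal category
with a uniform counital comagma structure on every object, such that every
morphism is a comagma homomorphism, every comultiplication is cocommutative. -/
theorem comagma_cocommutative {C : Type*} [Category C] [MonoidalCategory C]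
    [SymmetricCategory C]
    (δ : ∀ X : C, X ⟶ X ⊗ X) (ε : ∀ X : C, X ⟶ 𝟙_ C)
    (counit_l : ∀ X : C, δ X ≫ (ε X ⊗ₘ 𝟙 X) ≫ (λ_ X).hom = 𝟙 X)
    (counit_r : ∀ X : C, δ X ≫ (𝟙 X ⊗ₘ ε X) ≫ (ρ_ X).hom = 𝟙 X)
    (hom_δ : ∀ {X Y : C} (f : X ⟶ Y), f ≫ δ Y = δ X ≫ (f ⊗ₘ f))
    (hom_ε : ∀ {X Y : C} (f : X ⟶ Y), f ≫ ε Y = ε X)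
    (unif_ε : ∀ X Y : C, ε (X ⊗ Y) = (ε X ⊗ₘ ε Y) ≫ (λ_ (𝟙_ C)).hom)
    (unif_εI : ε (𝟙_ C) = 𝟙 (𝟙_ C))
    (unif_δI : δ (𝟙_ C) = (λ_ (𝟙_ C)).inv)
    (unif_δ : ∀ X Y : C, δ (X ⊗ Y) = (δ X ⊗ₘ δ Y) ≫
      (α_ X X (Y ⊗ Y)).hom ≫
      (X ◁ ((α_ X Y Y).inv ≫ ((β_ X Y).hom ▷ Y) ≫ (α_ Y X Y).hom)) ≫
      (α_ X Y (X ⊗ Y)).inv) :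
    ∀ X : C, δ X ≫ (β_ X X).hom = δ X :=
  comagma_cocommutative_general δ ε counit_l counit_r hom_δ unif_δ
end

section
/- Under the same hypotheses (uniform natural counital comagma structure on a symmetric monoidal category where all morphisms are comagma homomorphisms), the comultiplication δ_X is coassociative: δ_X ≫ (id_X ⊗ δ_X) = δ_X ≫ (δ_X ⊗ id_X) up to associators. -/
open CategoryTheory MonoidalCategory

/-! Naturality of `δ` along the morphism `δ X` gives `δ X ≫ δ (X ⊗ X) = δ X ≫ (δ X ⊗ δ X)`, and by
uniformity the left side is the right side followed by the middle-four interchange `tensorμ`.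
Discarding the second of the four copies with `ε` turns the plain side into `𝟙 ⊗ δ` and the
interchanged side into `(δ ⊗ 𝟙) ≫ α`, by the two counit laws. -/

section
variable {C : Type*} [Category C] [MonoidalCategory C] [BraidedCategory C]

lemma tensorμ_tensorUnit_comp_rightUnitor_whiskerRight (W X Z : C) :
    tensorμ W X (𝟙_ C) Z ≫ (ρ_ W).hom ▷ (X ⊗ Z) = (W ⊗ X) ◁ (λ_ Z).hom ≫ (α_ W X Z).hom := by
  rw [tensorμ, braiding_tensorUnit_right]
  monoidal

lemma tensorμ_comp_discard_whiskerRight {W X Y Z : C} (e : Y ⟶ 𝟙_ C) :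
    tensorμ W X Y Z ≫ (W ◁ e ≫ (ρ_ W).hom) ▷ (X ⊗ Z) =
      (W ⊗ X) ◁ (e ▷ Z ≫ (λ_ Z).hom) ≫ (α_ W X Z).hom := by
  have hnat : tensorμ W X Y Z ≫ (W ◁ e) ▷ (X ⊗ Z) = (W ⊗ X) ◁ (e ▷ Z) ≫ tensorμ W X (𝟙_ C) Z := by
    simpa using (tensorμ_natural (𝟙 W) (𝟙 X) e (𝟙 Z)).symm
  rw [comp_whiskerRight, reassoc_of% hnat, tensorμ_tensorUnit_comp_rightUnitor_whiskerRight,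
    MonoidalCategory.whiskerLeft_comp_assoc]
end

theorem comagma_coassociative_general {C : Type*} [Category C] [MonoidalCategory C]
    [SymmetricCategory C]
    (δ : ∀ X : C, X ⟶ X ⊗ X) (ε : ∀ X : C, X ⟶ 𝟙_ C)
    (counit_l : ∀ X : C, δ X ≫ (ε X ⊗ₘ 𝟙 X) ≫ (λ_ X).hom = 𝟙 X)
    (counit_r : ∀ X : C, δ X ≫ (𝟙 X ⊗ₘ ε X) ≫ (ρ_ X).hom = 𝟙 X)
    (hom_δ : ∀ {X Y : C} (f : X ⟶ Y), f ≫ δ Y = δ X ≫ (f ⊗ₘ f))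
    (unif_δ : ∀ X Y : C, δ (X ⊗ Y) = (δ X ⊗ₘ δ Y) ≫
      (α_ X X (Y ⊗ Y)).hom ≫
      (X ◁ ((α_ X Y Y).inv ≫ ((β_ X Y).hom ▷ Y) ≫ (α_ Y X Y).hom)) ≫
      (α_ X Y (X ⊗ Y)).inv) :
    ∀ X : C, δ X ≫ (𝟙 X ⊗ₘ δ X) = δ X ≫ (δ X ⊗ₘ 𝟙 X) ≫ (α_ X X X).hom := by
  intro X
  simp only [id_tensorHom, tensorHom_id] at counit_l counit_r ⊢
  have δ_tensor_self : δ (X ⊗ X) = (δ X ⊗ₘ δ X) ≫ tensorμ X X X X := by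
    simp [unif_δ, tensorμ]
  have δ_δ : δ X ≫ (δ X ⊗ₘ δ X) ≫ tensorμ X X X X = δ X ≫ (δ X ⊗ₘ δ X) := by
    rw [← δ_tensor_self, hom_δ]
  calc δ X ≫ X ◁ δ X
      = δ X ≫ (δ X ⊗ₘ δ X) ≫ (X ◁ ε X ≫ (ρ_ X).hom) ▷ (X ⊗ X) := by
        rw [tensorHom_comp_whiskerRight, counit_r, id_tensorHom]
    _ = δ X ≫ (δ X ⊗ₘ δ X) ≫ (X ⊗ X) ◁ (ε X ▷ X ≫ (λ_ X).hom) ≫ (α_ X X X).hom := by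
        rw [← tensorμ_comp_discard_whiskerRight, reassoc_of% δ_δ]
    _ = δ X ≫ δ X ▷ X ≫ (α_ X X X).hom := by
        rw [tensorHom_comp_whiskerLeft_assoc, counit_l, tensorHom_id]

/-- Refined Fox theorem, coassociativity part: in a symmetric monoidal category
with a uniform counital comagma structure on every object, such that every
morphism is a comagma homomorphism, every comultiplication is coassociative (up to associators). -/
theorem comagma_coassociative {C : Type*} [Category C] [MonoidalCategory C]
    [SymmetricCategory C]
    (δ : ∀ X : C, X ⟶ X ⊗ X) (ε : ∀ X : C, X ⟶ 𝟙_ C)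
    (counit_l : ∀ X : C, δ X ≫ (ε X ⊗ₘ 𝟙 X) ≫ (λ_ X).hom = 𝟙 X)
    (counit_r : ∀ X : C, δ X ≫ (𝟙 X ⊗ₘ ε X) ≫ (ρ_ X).hom = 𝟙 X)
    (hom_δ : ∀ {X Y : C} (f : X ⟶ Y), f ≫ δ Y = δ X ≫ (f ⊗ₘ f))
    (hom_ε : ∀ {X Y : C} (f : X ⟶ Y), f ≫ ε Y = ε X)
    (unif_ε : ∀ X Y : C, ε (X ⊗ Y) = (ε X ⊗ₘ ε Y) ≫ (λ_ (𝟙_ C)).hom)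
    (unif_εI : ε (𝟙_ C) = 𝟙 (𝟙_ C))
    (unif_δI : δ (𝟙_ C) = (λ_ (𝟙_ C)).inv)
    (unif_δ : ∀ X Y : C, δ (X ⊗ Y) = (δ X ⊗ₘ δ Y) ≫
      (α_ X X (Y ⊗ Y)).hom ≫
      (X ◁ ((α_ X Y Y).inv ≫ ((β_ X Y).hom ▷ Y) ≫ (α_ Y X Y).hom)) ≫
      (α_ X Y (X ⊗ Y)).inv) :
    ∀ X : C, δ X ≫ (𝟙 X ⊗ₘ δ X) = δ X ≫ (δ X ⊗ₘ 𝟙 X) ≫ (α_ X X X).hom :=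
  comagma_coassociative_general δ ε counit_l counit_r hom_δ unif_δ
end
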